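/- Let π be a partition of {1,…,k} with q = #π blocks and let G be a π-consistent graph with exactly k−q+1 connected components, with edge decomposition E^{(1)},…,E^{(q)} as in the definition of consistency. Then for every s∈{1,…,q}, the edges of E^{(s)} belong to pairwise distinct connected components of G. -/

import Mathlib

open Finset

section Defs

open scoped Classical

variable {k : ℕ}

/-- Two elements lie in the same block of the partition. -/
def InSameBlock (P : Finpartition (Finset.univ : Finset (Fin k))) (x y : Fin k) : Prop :=
  ∃ B ∈ P.parts, x ∈ B ∧ y ∈ B

/-- A partition of `{1,…,k}` is crossing if there are `a < b < c < d` with `a ∼ c`, `b ∼ d`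
but `a` and `c` not in the same block as `b` and `d`. -/
def IsCrossing (P : Finpartition (Finset.univ : Finset (Fin k))) : Prop :=
  ∃ a b c d : Fin k, a < b ∧ b < c ∧ c < d ∧
    InSameBlock P a c ∧ InSameBlock P b d ∧ ¬ InSameBlock P a b

/-- The closed block `B̄ = B ∪ {l : l - 1 ∈ B}` (indices cyclic). -/
def closedBlock [NeZero k] (B : Finset (Fin k)) : Finset (Fin k) :=
  B ∪ B.image (· + 1)

/-- The multiplicity `m_π(l)`: `2` if `l ∼_π l-1`, and `1` otherwise. -/
noncomputable def multPi [NeZero k] (P : Finpartition (Finset.univ : Finset (Fin k)))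
    (l : Fin k) : ℕ :=
  if InSameBlock P l (l - 1) then 2 else 1

/-- Number of endpoints of the edge `e` equal to `v`, counted with multiplicity
(a loop at `v` counts twice). -/
def endCount (v : Fin k) (e : Sym2 (Fin k)) : ℕ :=
  Sym2.lift ⟨fun a b => (if a = v then 1 else 0) + (if b = v then 1 else 0),
    fun _ _ => add_comm _ _⟩ e

/-- Degree of the vertex `v` in the multiset of edges `M`. -/
def degIn (v : Fin k) (M : Multiset (Sym2 (Fin k))) : ℕ :=
  (M.map (endCount v)).sum

/-- The simple graph underlying the multigraph with edge multiset `M`. -/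
def graphOf (M : Multiset (Sym2 (Fin k))) : SimpleGraph (Fin k) where
  Adj v w := v ≠ w ∧ s(v, w) ∈ M
  symm := ⟨by
    intro v w h
    exact ⟨Ne.symm h.1, by rw [Sym2.eq_swap]; exact h.2⟩⟩
  loopless := ⟨fun v h => h.1 rfl⟩

/-- Number of connected components of the multigraph with edge multiset `M`
(isolated vertices and vertices carrying only loops count as components). -/
noncomputable def numComponents (M : Multiset (Sym2 (Fin k))) : ℕ :=
  Nat.card (graphOf M).ConnectedComponent

/-- `M` together with the decomposition `F` is a `π`-consistent multigraph:
`M` has `k` edges; `M` is the disjoint union of the `F B`, `B` a block of `π`;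
the ends of every edge of `F B` lie in the closed block `B̄`; and in the submultigraph
`(B̄, F B)` every vertex `l ∈ B̄` has degree `m_π(l)`. -/
def IsConsistentDecomp [NeZero k] (P : Finpartition (Finset.univ : Finset (Fin k)))
    (M : Multiset (Sym2 (Fin k))) (F : Finset (Fin k) → Multiset (Sym2 (Fin k))) : Prop :=
  Multiset.card M = k ∧
  M = ∑ B ∈ P.parts, F B ∧
  (∀ B ∈ P.parts, ∀ e ∈ F B, ∀ v ∈ e, v ∈ closedBlock B) ∧
  (∀ B ∈ P.parts, ∀ v ∈ closedBlock B, degIn v (F B) = multPi P v)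

/-- A `π`-consistent multigraph. -/
def Consistent [NeZero k] (P : Finpartition (Finset.univ : Finset (Fin k)))
    (M : Multiset (Sym2 (Fin k))) : Prop :=
  ∃ F, IsConsistentDecomp P M F

end Defs

/-!
Form the bipartite multigraph whose vertices are the connected components of `G` and the blocks
of `π`, with one edge `(component of e, B)` for every `e ∈ E^{(B)}`: it has `k` edges and
`(k - q + 1) + q = k + 1` vertices. It is connected, since `l + 1` lies in the closed blocks of
both `l` and `l + 1`, so cyclically consecutive blocks share a component, and every component
meets the block of any of its vertices. A connected graph on `k + 1` vertices has at least `k`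
distinct edges, so these `k` edges are pairwise distinct, which is the claim.
-/

namespace SimpleGraph

variable {α β : Type*}

def incidenceGraph (S : Finset (α × β)) : SimpleGraph (α ⊕ β) :=
  fromEdgeSet ((fun p : α × β ↦ s(Sum.inl p.1, Sum.inr p.2)) '' S)

@[simp]
lemma incidenceGraph_adj_inl_inr {S : Finset (α × β)} {a : α} {b : β} :
    (incidenceGraph S).Adj (.inl a) (.inr b) ↔ (a, b) ∈ S := by
  simp [incidenceGraph]

lemma Connected.card_add_card_le_card_add_one [Finite α] [Finite β] {S : Finset (α × β)}
    (h : (incidenceGraph S).Connected) : Nat.card α + Nat.card β ≤ S.card + 1 := by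
  have hE : Nat.card (incidenceGraph S).edgeSet ≤ S.card := by
    rw [Nat.card_coe_set_eq, ← Set.ncard_coe_finset]
    calc (incidenceGraph S).edgeSet.ncard
        ≤ ((fun p : α × β ↦ s(Sum.inl p.1, Sum.inr p.2)) '' (S : Set (α × β))).ncard :=
          Set.ncard_le_ncard (by simp [incidenceGraph, edgeSet_fromEdgeSet])
      _ ≤ _ := Set.ncard_image_le
  have := h.card_vert_le_card_edgeSet_add_one
  rw [Nat.card_sum] at this
  omega

open Fin.NatCast Fin.CommRing in
lemma reachable_of_reachable_succ {V : Type*} {H : SimpleGraph V} {k : ℕ} [NeZero k]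
    {f : Fin k → V} (h : ∀ i, H.Reachable (f i) (f (i + 1))) (i j : Fin k) :
    H.Reachable (f i) (f j) := by
  have key : ∀ n : ℕ, H.Reachable (f i) (f (i + (n : Fin k))) := by
    intro n
    induction n with
    | zero => simp
    | succ n ih => simpa [add_assoc] using ih.trans (h (i + n))
  simpa using key (j - i).val

end SimpleGraph

open SimpleGraph

section Incidence

variable {k : ℕ}

lemma graphOf_reachable_of_mem {M : Multiset (Sym2 (Fin k))} {e : Sym2 (Fin k)} (he : e ∈ M)
    {v w : Fin k} (hv : v ∈ e) (hw : w ∈ e) : (graphOf M).Reachable v w := by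
  by_cases hvw : v = w
  · exact hvw ▸ Reachable.refl v
  · refine Adj.reachable ⟨hvw, ?_⟩
    rwa [← (Sym2.mem_and_mem_iff hvw).mp ⟨hv, hw⟩]

/-- The choice of endpoint is irrelevant for edges of `M`, see `edgeComponent_eq_of_mem`. -/
noncomputable def edgeComponent (M : Multiset (Sym2 (Fin k))) (e : Sym2 (Fin k)) :
    (graphOf M).ConnectedComponent :=
  (graphOf M).connectedComponentMk e.out.1

lemma edgeComponent_eq_of_mem {M : Multiset (Sym2 (Fin k))} {e : Sym2 (Fin k)} (he : e ∈ M)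
    {v : Fin k} (hv : v ∈ e) : edgeComponent M e = (graphOf M).connectedComponentMk v :=
  ConnectedComponent.sound (graphOf_reachable_of_mem he (Sym2.out_fst_mem e) hv)

lemma exists_mem_of_degIn_ne_zero {v : Fin k} {s : Multiset (Sym2 (Fin k))}
    (h : degIn v s ≠ 0) : ∃ e ∈ s, v ∈ e := by
  contrapose! h
  refine Multiset.sum_eq_zero fun n hn ↦ ?_
  obtain ⟨e, he, rfl⟩ := Multiset.mem_map.1 hn
  have hve := h e he
  induction e using Sym2.ind with
  | _ a b =>
    simp only [Sym2.mem_iff, not_or] at hve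
    simp [endCount, Ne.symm hve.1, Ne.symm hve.2]

end Incidence

section Consistent

open scoped Classical

variable {k : ℕ} [NeZero k] {P : Finpartition (univ : Finset (Fin k))}
  {M : Multiset (Sym2 (Fin k))} {F : Finset (Fin k) → Multiset (Sym2 (Fin k))}

lemma IsConsistentDecomp.mem_of_mem (hF : IsConsistentDecomp P M F) {B : Finset (Fin k)}
    (hB : B ∈ P.parts) {e : Sym2 (Fin k)} (he : e ∈ F B) : e ∈ M :=
  hF.2.1 ▸ Multiset.mem_sum.2 ⟨B, hB, he⟩

variable (P M F) in
noncomputable def blockIncidences : Multiset ((graphOf M).ConnectedComponent × P.parts) :=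
  ∑ B : P.parts, (F B).map fun e ↦ (edgeComponent M e, B)

lemma card_blockIncidences (hF : IsConsistentDecomp P M F) :
    Multiset.card (blockIncidences P M F) = k := by
  simp only [blockIncidences, Multiset.card_sum, Multiset.card_map]
  rw [Finset.sum_coe_sort P.parts (fun B ↦ Multiset.card (F B)), ← Multiset.card_sum, ← hF.2.1,
    hF.1]

lemma mk_mem_blockIncidences (hF : IsConsistentDecomp P M F) {B : Finset (Fin k)}
    (hB : B ∈ P.parts) {v : Fin k} (hv : v ∈ closedBlock B) :
    ((graphOf M).connectedComponentMk v, ⟨B, hB⟩) ∈ blockIncidences P M F := by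
  have hdeg : degIn v (F B) ≠ 0 := by
    rw [hF.2.2.2 B hB v hv, multPi]
    split <;> omega
  obtain ⟨e, he, hve⟩ := exists_mem_of_degIn_ne_zero hdeg
  refine Multiset.mem_sum.2 ⟨⟨B, hB⟩, mem_univ _, Multiset.mem_map.2 ⟨e, he, ?_⟩⟩
  rw [edgeComponent_eq_of_mem (hF.mem_of_mem hB he) hve]

open Fin.NatCast Fin.CommRing in
lemma connected_incidenceGraph_blockIncidences (hF : IsConsistentDecomp P M F) :
    (incidenceGraph (blockIncidences P M F).toFinset).Connected := by
  set H := incidenceGraph (blockIncidences P M F).toFinset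
  have hadj {v : Fin k} {B : Finset (Fin k)} (hB : B ∈ P.parts) (hv : v ∈ closedBlock B) :
      H.Adj (.inl ((graphOf M).connectedComponentMk v)) (.inr ⟨B, hB⟩) := by
    simpa [H] using mk_mem_blockIncidences hF hB hv
  have hpart (v : Fin k) : P.part v ∈ P.parts := P.part_mem.2 (mem_univ v)
  have hself (v : Fin k) : v ∈ closedBlock (P.part v) :=
    mem_union_left _ (P.mem_part (mem_univ v))
  have hsucc (v : Fin k) : v + 1 ∈ closedBlock (P.part v) :=
    mem_union_right _ (mem_image_of_mem _ (P.mem_part (mem_univ v)))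
  let block (v : Fin k) : (graphOf M).ConnectedComponent ⊕ P.parts := .inr ⟨P.part v, hpart v⟩
  -- consecutive blocks meet in the component of `v + 1`
  have hblocks : ∀ v w, H.Reachable (block v) (block w) :=
    reachable_of_reachable_succ fun v ↦
      (hadj (hpart v) (hsucc v)).reachable.symm.trans (hadj (hpart _) (hself (v + 1))).reachable
  have hroot : ∀ x, ∃ v, H.Reachable x (block v)
    | .inl C => C.ind fun v ↦ ⟨v, (hadj (hpart v) (hself v)).reachable⟩
    | .inr B => by
      obtain ⟨v, hv⟩ := P.nonempty_of_mem_parts B.2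
      refine ⟨v, ?_⟩
      rw [show block v = .inr B from congrArg Sum.inr (Subtype.ext (P.part_eq_of_mem B.2 hv))]
  have : Nonempty ((graphOf M).ConnectedComponent ⊕ P.parts) := ⟨block 0⟩
  refine ⟨fun x y ↦ ?_⟩
  obtain ⟨v, hxv⟩ := hroot x
  obtain ⟨w, hyw⟩ := hroot y
  exact hxv.trans ((hblocks v w).trans hyw.symm)

lemma nodup_blockIncidences (hF : IsConsistentDecomp P M F)
    (hmax : numComponents M = k - P.parts.card + 1) : (blockIncidences P M F).Nodup := by
  have hq : P.parts.card ≤ k := by simpa using P.card_parts_le_card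
  have hbound := (connected_incidenceGraph_blockIncidences hF).card_add_card_le_card_add_one
  rw [Nat.card_eq_finsetCard, ← numComponents, hmax] at hbound
  have := Multiset.toFinset_card_le (blockIncidences P M F)
  rw [card_blockIncidences hF] at this
  rw [← Multiset.toFinset_card_eq_card_iff_nodup, card_blockIncidences hF]
  omega

end Consistent

/-- **Remark (edges of one block lie in distinct components).**
If `G` is a `π`-consistent multigraph with the maximal number `k - #π + 1` of connected
components, with edge decomposition `F` as in the definition of consistency, then for every
block `B` of `π` the edges of `F B` belong to pairwise distinct connected components of `G`:
no edge occurs twice in `F B`, and the endpoints of two distinct edges of `F B` are never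
joined by a path in `G`. -/
theorem edges_of_block_in_distinct_components (k : ℕ) [NeZero k]
    (P : Finpartition (Finset.univ : Finset (Fin k)))
    (M : Multiset (Sym2 (Fin k))) (F : Finset (Fin k) → Multiset (Sym2 (Fin k)))
    (hF : IsConsistentDecomp P M F)
    (hmax : numComponents M = k - P.parts.card + 1) :
    ∀ B ∈ P.parts,
      (∀ e ∈ F B, (F B).count e ≤ 1) ∧
      (∀ e ∈ F B, ∀ e' ∈ F B, e ≠ e' →
        ∀ v ∈ e, ∀ w ∈ e', ¬ (graphOf M).Reachable v w) := by
  intro B hB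
  have hnodup : ((F B).map fun e ↦ (edgeComponent M e, (⟨B, hB⟩ : P.parts))).Nodup :=
    Multiset.nodup_of_le
      (Finset.single_le_sum (f := fun B : P.parts ↦ (F B).map fun e ↦ (edgeComponent M e, B))
        (fun _ _ ↦ Multiset.zero_le _) (mem_univ _))
      (nodup_blockIncidences hF hmax)
  refine ⟨fun e _ ↦ Multiset.nodup_iff_count_le_one.1 (hnodup.of_map _) e, ?_⟩
  intro e he e' he' hne v hv w hw hvw
  refine hne (Multiset.inj_on_of_nodup_map hnodup e he e' he' (Prod.ext ?_ rfl))
  rw [edgeComponent_eq_of_mem (hF.mem_of_mem hB he) hv,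
    edgeComponent_eq_of_mem (hF.mem_of_mem hB he') hw]
  exact ConnectedComponent.sound hvw
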